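/- Fix δ ∈ (0,1/4) and set L = ⌊1/(2δ)⌋ + 1. There exists ρ' = ρ'(δ) > 0 such that for every λ ∈ (δ, 1/2−δ), every m ∈ ℕ, and every level-m cylinder C of the Bernoulli convolution μ_λ: if Q ⊆ C is a union of at most L intervals with total Lebesgue measure less than ρ'·|C| = ρ'·λ^m·2/(1−λ)·(1/2), then μ_λ(Q) ≤ (1/2)·μ_λ(C). -/

import Mathlib

open MeasureTheory Filter Set

noncomputable section

/-- The sign associated to a boolean: `true ↦ 1`, `false ↦ -1`. -/
def sgn (b : Bool) : ℝ := if b then 1 else -1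

/-- `ν` is the (1/2,1/2) i.i.d. Bernoulli measure on `{-1,1}^ℕ` (coded by booleans). -/
def IsBernoulliMeasure (ν : Measure (ℕ → Bool)) : Prop :=
  IsProbabilityMeasure ν ∧
    ∀ (s : Finset ℕ) (b : ℕ → Bool), ν {a | ∀ i ∈ s, a i = b i} = (1 / 2 : ENNReal) ^ s.card

/-- The random series `X(λ; a) = Σ_{m≥1} a_m λ^{m-1}` (zero-indexed). -/
def X (lam : ℝ) (a : ℕ → Bool) : ℝ := ∑' n : ℕ, sgn (a n) * lam ^ n

/-- The Bernoulli convolution `μ_λ`, the law of `X(λ; ·)`. -/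
def bc (ν : Measure (ℕ → Bool)) (lam : ℝ) : Measure ℝ := ν.map (X lam)

/-- Fourier transform `μ̂(ξ) = ∫ e^{iξx} dμ(x)` of a measure on `ℝ`. -/
def FT (μ : Measure ℝ) (ξ : ℝ) : ℂ := ∫ x, Complex.exp (ξ * x * Complex.I) ∂μ

/-- The maps `f₁(x) = λx - 1`, `f₂(x) = λx + 1` of the generating IFS. -/
def ifsMap (lam : ℝ) (b : Bool) (x : ℝ) : ℝ := lam * x + sgn b

/-- The interval `K_λ = [-1/(1-λ), 1/(1-λ)]`. -/
def K (lam : ℝ) : Set ℝ := Icc (-(1 / (1 - lam))) (1 / (1 - lam))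

/-- The level-`m` cylinder `C_w = f_{w₁} ∘ ⋯ ∘ f_{w_m} (K_λ)` for a word `w` of length `m`. -/
def cylinder (lam : ℝ) : List Bool → Set ℝ
  | [] => K lam
  | b :: w => ifsMap lam b '' cylinder lam w

/-!
Two points of `supp μ_λ` whose codings first differ at index `n` are at distance at least
`2(1-2λ)/(1-λ) · λⁿ`, the gap between the images of `K_λ` under `f₁` and `f₂`, scaled by `λⁿ`.
So an interval of length below this gap carries at most the mass `2^{-(n+1)}` of one
level-`(n+1)` cylinder. With `ρ' = 4δ^{L+1}` and `n = m + L` each of the `L` intervals making up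
`Q` is that short, so `μ_λ(Q) ≤ L·2^{-(m+L+1)} ≤ 2^{-(m+1)} ≤ μ_λ(C)/2`.
-/

open scoped ENNReal

lemma abs_sgn (b : Bool) : |sgn b| = 1 := by cases b <;> simp [sgn]

lemma summable_X {lam : ℝ} (hlam : |lam| < 1) (a : ℕ → Bool) :
    Summable fun n => sgn (a n) * lam ^ n :=
  .of_norm_bounded (summable_geometric_of_lt_one (abs_nonneg lam) hlam) fun n => by
    rw [Real.norm_eq_abs, abs_mul, abs_sgn, one_mul, abs_pow]

lemma measurable_X {lam : ℝ} (hlam : |lam| < 1) : Measurable (X lam) := by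
  refine measurable_of_tendsto_metrizable
    (f := fun N a => ∑ n ∈ Finset.range N, sgn (a n) * lam ^ n) (fun N => ?_) ?_
  · exact Finset.measurable_sum _ fun n _ =>
      ((measurable_from_top (f := sgn)).comp (measurable_pi_apply n)).mul_const _
  · exact tendsto_pi_nhds.mpr fun a => (summable_X hlam a).hasSum.tendsto_sum_nat

lemma X_eq_ifsMap {lam : ℝ} (hlam : |lam| < 1) (a : ℕ → Bool) :
    X lam a = ifsMap lam (a 0) (X lam fun n => a (n + 1)) := by
  have hshift : ∀ n, sgn (a (n + 1)) * lam ^ (n + 1) = lam * (sgn (a (n + 1)) * lam ^ n) :=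
    fun n => by ring
  rw [X, (summable_X hlam a).tsum_eq_zero_add, X, ifsMap]
  simp only [hshift, pow_zero, mul_one, tsum_mul_left]
  ring

lemma X_mem_K {lam : ℝ} (h0 : 0 ≤ lam) (h1 : lam < 1) (a : ℕ → Bool) : X lam a ∈ K lam := by
  have hbound : |X lam a| ≤ 1 / (1 - lam) := by
    rw [← Real.norm_eq_abs, one_div]
    exact tsum_of_norm_bounded (hasSum_geometric_of_lt_one h0 h1) fun n => by
      rw [Real.norm_eq_abs, abs_mul, abs_sgn, one_mul, abs_pow, abs_of_nonneg h0]
  exact abs_le.mp hbound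

lemma X_mem_cylinder {lam : ℝ} (h0 : 0 ≤ lam) (h1 : lam < 1) :
    ∀ (w : List Bool) (a : ℕ → Bool), (∀ i (hi : i < w.length), a i = w[i]) →
      X lam a ∈ _root_.cylinder lam w
  | [], a, _ => X_mem_K h0 h1 a
  | b :: w, a, ha =>
    ⟨_, X_mem_cylinder h0 h1 w (fun n => a (n + 1)) fun i hi => ha (i + 1) (by simpa using hi),
      by rw [X_eq_ifsMap (by rwa [abs_of_nonneg h0]) a, ha 0 (by simp)]; rfl⟩

lemma gap_le_ifsMap_true_sub_ifsMap_false {lam u v : ℝ} (h0 : 0 ≤ lam) (h1 : lam < 1)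
    (hu : u ∈ K lam) (hv : v ∈ K lam) :
    2 * (1 - 2 * lam) / (1 - lam) ≤ ifsMap lam true u - ifsMap lam false v := by
  have hpos : 0 < 1 - lam := by linarith
  have huv : -(2 / (1 - lam)) ≤ u - v := by
    linarith [hu.1, hv.2, show 2 / (1 - lam) = 1 / (1 - lam) + 1 / (1 - lam) by ring]
  calc 2 * (1 - 2 * lam) / (1 - lam) = lam * -(2 / (1 - lam)) + 2 := by field_simp; ring
    _ ≤ lam * (u - v) + 2 := by gcongr
    _ = ifsMap lam true u - ifsMap lam false v := by simp only [ifsMap, sgn]; norm_num; ring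

lemma gap_le_abs_X_sub_of_ne {lam : ℝ} (h0 : 0 ≤ lam) (h1 : lam < 1) {a a' : ℕ → Bool}
    (hne : a 0 ≠ a' 0) : 2 * (1 - 2 * lam) / (1 - lam) ≤ |X lam a - X lam a'| := by
  have hlam : |lam| < 1 := by rwa [abs_of_nonneg h0]
  have key := fun a a' : ℕ → Bool => gap_le_ifsMap_true_sub_ifsMap_false h0 h1
    (X_mem_K h0 h1 a) (X_mem_K h0 h1 a')
  rw [X_eq_ifsMap hlam a, X_eq_ifsMap hlam a']
  cases ha : a 0 <;> cases ha' : a' 0 <;> simp only [ha, ha', ne_eq, not_true_eq_false] at hne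
  · exact (key _ _).trans (le_abs_self _) |>.trans_eq (abs_sub_comm _ _)
  · exact (key _ _).trans (le_abs_self _)

lemma gap_mul_pow_le_abs_X_sub {lam : ℝ} (h0 : 0 ≤ lam) (h2 : lam ≤ 1 / 2) (n : ℕ)
    (a a' : ℕ → Bool) (hdiff : ∃ i ≤ n, a i ≠ a' i) :
    2 * (1 - 2 * lam) / (1 - lam) * lam ^ n ≤ |X lam a - X lam a'| := by
  have h1 : lam < 1 := by linarith
  have hlam : |lam| < 1 := by rwa [abs_of_nonneg h0]
  have hgap : 0 ≤ 2 * (1 - 2 * lam) / (1 - lam) := div_nonneg (by linarith) (by linarith)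
  induction n generalizing a a' with
  | zero =>
    obtain ⟨i, hi, hne⟩ := hdiff
    rw [Nat.le_zero.mp hi] at hne
    simpa using gap_le_abs_X_sub_of_ne h0 h1 hne
  | succ n ih =>
    obtain ⟨i, hi, hne⟩ := hdiff
    by_cases hhead : a 0 = a' 0
    · obtain ⟨k, rfl⟩ : ∃ k, i = k + 1 :=
        Nat.exists_eq_succ_of_ne_zero (by rintro rfl; exact hne hhead)
      have htail := ih (fun n => a (n + 1)) (fun n => a' (n + 1)) ⟨k, by omega, hne⟩
      calc 2 * (1 - 2 * lam) / (1 - lam) * lam ^ (n + 1)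
          = lam * (2 * (1 - 2 * lam) / (1 - lam) * lam ^ n) := by ring
        _ ≤ lam * |X lam (fun n => a (n + 1)) - X lam (fun n => a' (n + 1))| := by gcongr
        _ = |X lam a - X lam a'| := by
          rw [X_eq_ifsMap hlam a, X_eq_ifsMap hlam a', hhead, ifsMap, ifsMap,
            add_sub_add_right_eq_sub, ← mul_sub, abs_mul, abs_of_nonneg h0]
    · exact (mul_le_of_le_one_right hgap (pow_le_one₀ h0 h1.le)).trans
        (gap_le_abs_X_sub_of_ne h0 h1 hhead)

lemma measure_preimage_X_le {ν : Measure (ℕ → Bool)} (hν : IsBernoulliMeasure ν) {lam : ℝ}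
    (h0 : 0 ≤ lam) (h2 : lam ≤ 1 / 2) {S : Set ℝ} (n : ℕ)
    (hS : ∀ x ∈ S, ∀ y ∈ S, |x - y| < 2 * (1 - 2 * lam) / (1 - lam) * lam ^ n) :
    ν (X lam ⁻¹' S) ≤ (1 / 2) ^ (n + 1) := by
  rcases (X lam ⁻¹' S).eq_empty_or_nonempty with hempty | ⟨a₀, ha₀⟩
  · simp [hempty]
  calc ν (X lam ⁻¹' S) ≤ ν {a | ∀ i ∈ Finset.range (n + 1), a i = a₀ i} :=
        measure_mono fun a ha i hi => by
          by_contra hne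
          exact (hS _ ha _ ha₀).not_ge <| gap_mul_pow_le_abs_X_sub h0 h2 n a a₀
            ⟨i, Nat.lt_succ_iff.mp (Finset.mem_range.mp hi), hne⟩
    _ = (1 / 2) ^ (n + 1) := by rw [hν.2, Finset.card_range]

lemma ofReal_abs_sub_le_volume {I : Set ℝ} (hI : I.OrdConnected) {x y : ℝ} (hx : x ∈ I)
    (hy : y ∈ I) : ENNReal.ofReal |x - y| ≤ volume I := by
  rw [abs_sub_comm, ← Real.volume_interval]
  exact measure_mono (hI.uIcc_subset hx hy)

lemma bc_le_of_ordConnected {ν : Measure (ℕ → Bool)} (hν : IsBernoulliMeasure ν) {lam : ℝ}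
    (h0 : 0 ≤ lam) (h2 : lam ≤ 1 / 2) {I : Set ℝ} (hI : I.OrdConnected) (n : ℕ)
    (hvol : volume I < ENNReal.ofReal (2 * (1 - 2 * lam) / (1 - lam) * lam ^ n)) :
    bc ν lam I ≤ (1 / 2) ^ (n + 1) := by
  rw [bc, Measure.map_apply (measurable_X (by rw [abs_of_nonneg h0]; linarith))
    hI.measurableSet]
  exact measure_preimage_X_le hν h0 h2 n fun x hx y hy =>
    (ENNReal.ofReal_lt_ofReal_iff'.mp ((ofReal_abs_sub_le_volume hI hx hy).trans_lt hvol)).1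

lemma half_pow_length_le_bc_cylinder {ν : Measure (ℕ → Bool)} (hν : IsBernoulliMeasure ν)
    {lam : ℝ} (h0 : 0 ≤ lam) (h1 : lam < 1) (w : List Bool) :
    (1 / 2) ^ w.length ≤ bc ν lam (_root_.cylinder lam w) := by
  calc (1 / 2 : ℝ≥0∞) ^ w.length
      = ν {a | ∀ i ∈ Finset.range w.length, a i = w.getD i false} := by
        rw [hν.2, Finset.card_range]
    _ ≤ ν (X lam ⁻¹' _root_.cylinder lam w) := measure_mono fun a ha =>
        X_mem_cylinder h0 h1 w a fun i hi => by
          rw [ha i (Finset.mem_range.mpr hi), List.getD_eq_getElem]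
    _ ≤ bc ν lam (_root_.cylinder lam w) :=
        Measure.le_map_apply (measurable_X (by rwa [abs_of_nonneg h0])).aemeasurable _

lemma four_mul_pow_div_le_gap_mul_pow {δ lam : ℝ} (hδ : 0 < δ) (hlam : lam ∈ Ioo δ (1 / 2 - δ))
    (m L : ℕ) :
    4 * δ ^ (L + 1) * lam ^ m / (1 - lam) ≤ 2 * (1 - 2 * lam) / (1 - lam) * lam ^ (m + L) := by
  obtain ⟨hlo, hhi⟩ := hlam
  rw [div_mul_eq_mul_div]
  refine div_le_div_of_nonneg_right ?_ (by linarith)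
  calc 4 * δ ^ (L + 1) * lam ^ m = 4 * δ * δ ^ L * lam ^ m := by ring
    _ ≤ 2 * (1 - 2 * lam) * lam ^ L * lam ^ m :=
        mul_le_mul_of_nonneg_right (mul_le_mul (by linarith) (pow_le_pow_left₀ hδ.le hlo.le L)
          (by positivity) (by linarith)) (pow_nonneg (hδ.le.trans hlo.le) m)
    _ = 2 * (1 - 2 * lam) * lam ^ (m + L) := by ring

lemma nat_mul_half_pow_le (L m : ℕ) :
    (L : ℝ≥0∞) * (1 / 2) ^ (m + L + 1) ≤ 1 / 2 * (1 / 2) ^ m := by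
  have htwo : (2 : ℝ≥0∞) * (1 / 2) = 1 := by
    rw [one_div, ENNReal.mul_inv_cancel] <;> norm_num
  calc (L : ℝ≥0∞) * (1 / 2) ^ (m + L + 1) ≤ 2 ^ L * (1 / 2) ^ (m + L + 1) := by
        gcongr; exact_mod_cast Nat.lt_two_pow_self.le
    _ = 1 / 2 * (1 / 2) ^ m * (2 * (1 / 2)) ^ L := by rw [mul_pow, pow_add, pow_add]; ring
    _ = 1 / 2 * (1 / 2) ^ m := by rw [htwo, one_pow, mul_one]

/-- for `δ ∈ (0,1/4)` and `L = ⌊1/(2δ)⌋ + 1` there is `ρ' > 0` such that for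
every `λ ∈ (δ, 1/2-δ)`, every level-`m` cylinder `C`, and every `Q ⊆ C` that is a union
of at most `L` intervals of total Lebesgue measure less than `ρ'·λ^m/(1-λ)`,
one has `μ_λ(Q) ≤ (1/2)·μ_λ(C)`. -/
theorem measure_of_thin_subset_of_cylinder
    (ν : Measure (ℕ → Bool)) (hν : IsBernoulliMeasure ν)
    (δ : ℝ) (hδ : δ ∈ Ioo (0 : ℝ) (1 / 4)) :
    ∃ ρ' > (0 : ℝ), ∀ lam ∈ Ioo δ (1 / 2 - δ), ∀ (m : ℕ) (w : List Bool), w.length = m →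
      ∀ Q : Set ℝ, Q ⊆ cylinder lam w →
      ∀ I : Fin (Nat.floor (1 / (2 * δ)) + 1) → Set ℝ,
        (∀ j, (I j).OrdConnected) → Q = ⋃ j, I j →
        volume Q < ENNReal.ofReal (ρ' * lam ^ m / (1 - lam)) →
        bc ν lam Q ≤ (1 / 2) * bc ν lam (cylinder lam w) := by
  set L := Nat.floor (1 / (2 * δ)) + 1
  refine ⟨4 * δ ^ (L + 1), by have := hδ.1; positivity, ?_⟩
  rintro lam hlam m w rfl Q - I hI rfl hvol
  have h0 : 0 ≤ lam := hδ.1.le.trans hlam.1.le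
  have h2 : lam ≤ 1 / 2 := by linarith [hlam.2, hδ.1]
  have hI_small (j) : bc ν lam (I j) ≤ (1 / 2) ^ (w.length + L + 1) :=
    bc_le_of_ordConnected hν h0 h2 (hI j) (w.length + L) <|
      calc volume (I j) ≤ volume (⋃ j, I j) := measure_mono (subset_iUnion I j)
        _ < _ := hvol
        _ ≤ _ := ENNReal.ofReal_le_ofReal (four_mul_pow_div_le_gap_mul_pow hδ.1 hlam _ L)
  calc bc ν lam (⋃ j, I j) ≤ ∑ j, bc ν lam (I j) := measure_iUnion_fintype_le _ _
    _ ≤ ∑ _j : Fin L, (1 / 2 : ℝ≥0∞) ^ (w.length + L + 1) :=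
        Finset.sum_le_sum fun j _ => hI_small j
    _ = L * (1 / 2) ^ (w.length + L + 1) := by simp
    _ ≤ 1 / 2 * (1 / 2) ^ w.length := nat_mul_half_pow_le L w.length
    _ ≤ 1 / 2 * bc ν lam (cylinder lam w) := by
        gcongr; exact half_pow_length_le_bc_cylinder hν h0 (by linarith) w

end
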